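/- Let T be a rooted tree with n nodes and let c be a natural number. Suppose a finite set of chips is given, each chip associated with a leaf of T, and each chip is placed on a node lying on the path from the root to its associated leaf, such that every root-to-leaf path contains at most c chips. Then the sum over all chips of the distance from the chip's node to its associated leaf is at most c(n-1). -/

import Mathlib

/-!
Charge each chip to the vertices of its path strictly after its position, down to its leaf;
in a tree the chip `i` charges exactly `dist (pos i) (leafOf i)` vertices. The root is never
charged. If some chip `j` charges a vertex `w`, then `w` lies on the root–`leafOf j` path and
every chip charging `w` sits between the root and `w`, hence on that root-to-leaf path too; so
each non-root vertex is charged at most `c` times.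
-/

open Classical Finset

namespace SimpleGraph

variable {V : Type*} {G : SimpleGraph V}

variable (G) in
def IsBetween (a w b : V) : Prop := G.dist a b = G.dist a w + G.dist w b

-- Decided as the equation it unfolds to, so that filters by `IsBetween` are literally the
-- filters of the theorem rather than classical ones.
noncomputable instance (a w b : V) : Decidable (G.IsBetween a w b) :=
  inferInstanceAs (Decidable (_ = _))

variable {a b w x y z : V}

lemma IsBetween.eq_of_swap (hG : G.Connected) (h₁ : G.IsBetween x y z)
    (h₂ : G.IsBetween y x z) : x = y := by
  unfold IsBetween at h₁ h₂
  exact hG.dist_eq_zero_iff.mp (by omega)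

lemma IsBetween.trans_left (hG : G.Connected)
    (h₁ : G.IsBetween w y z) (h₂ : G.IsBetween w x y) :
    G.IsBetween w x z := by
  unfold IsBetween at *
  have := hG.dist_triangle (u := w) (v := x) (w := z)
  have := hG.dist_triangle (u := x) (v := y) (w := z)
  omega

lemma IsBetween.trans_right (hG : G.Connected)
    (h₁ : G.IsBetween w x z) (h₂ : G.IsBetween x y z) :
    G.IsBetween w y z := by
  unfold IsBetween at *
  have := hG.dist_triangle (u := w) (v := y) (w := z)
  have := hG.dist_triangle (u := w) (v := x) (w := y)
  omega

lemma IsBetween.trans_right_left (hG : G.Connected)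
    (h₁ : G.IsBetween w x z) (h₂ : G.IsBetween x y z) :
    G.IsBetween w x y := by
  unfold IsBetween at *
  have := hG.dist_triangle (u := w) (v := y) (w := z)
  have := hG.dist_triangle (u := w) (v := x) (w := y)
  omega

lemma Walk.isBetween_of_mem_support {p : G.Walk a b} (hp : p.length = G.dist a b)
    (hw : w ∈ p.support) : G.IsBetween a w b := by
  have h₁ : G.dist a w ≤ (p.takeUntil w hw).length := dist_le _
  have h₂ : G.dist w b ≤ (p.dropUntil w hw).length := dist_le _
  have h₃ : (p.takeUntil w hw).length + (p.dropUntil w hw).length = p.length := by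
    rw [← Walk.length_append, p.take_spec hw]
  have := (p.takeUntil w hw).reachable.dist_triangle_left b
  unfold IsBetween
  omega

lemma IsTree.mem_support_of_isBetween (hT : G.IsTree) {p : G.Walk a b}
    (hp : p.length = G.dist a b) (hw : G.IsBetween a w b) : w ∈ p.support := by
  obtain ⟨q₁, hq₁⟩ := hT.connected.exists_walk_length_eq_dist a w
  obtain ⟨q₂, hq₂⟩ := hT.connected.exists_walk_length_eq_dist w b
  have hq : (q₁.append q₂).length = G.dist a b := by
    rw [Walk.length_append, hq₁, hq₂, hw]
  have := (hT.existsUnique_path a b).unique (Walk.isPath_of_length_eq_dist _ hq)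
    (Walk.isPath_of_length_eq_dist _ hp)
  rw [← this, Walk.mem_support_append_iff]
  exact Or.inl q₁.end_mem_support

lemma IsTree.card_filter_isBetween [Fintype V] (hT : G.IsTree) (a b : V) :
    #{w | G.IsBetween a w b} = G.dist a b + 1 := by
  obtain ⟨p, hp⟩ := hT.connected.exists_walk_length_eq_dist a b
  have : ({w | G.IsBetween a w b} : Finset V) = p.support.toFinset := by
    ext w
    simp only [mem_filter, mem_univ, true_and, List.mem_toFinset]
    exact ⟨hT.mem_support_of_isBetween hp, p.isBetween_of_mem_support hp⟩
  rw [this, List.toFinset_card_of_nodup (p.isPath_of_length_eq_dist hp).support_nodup,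
    Walk.length_support, hp]

lemma IsTree.card_filter_isBetween_ne [Fintype V] (hT : G.IsTree) (a b : V) :
    #{w | G.IsBetween a w b ∧ w ≠ a} = G.dist a b := by
  have ha : a ∈ ({w | G.IsBetween a w b} : Finset V) :=
    mem_filter.mpr ⟨mem_univ a, by simp [IsBetween]⟩
  rw [← filter_filter, filter_ne', card_erase_of_mem ha, hT.card_filter_isBetween,
    Nat.add_sub_cancel]

lemma IsTree.sum_dist_eq_sum_card_filter [Fintype V] (hT : G.IsTree) {ι : Type*} [Fintype ι]
    (s t : ι → V) :
    ∑ i, G.dist (s i) (t i) = ∑ w, #{i | G.IsBetween (s i) w (t i) ∧ w ≠ s i} := by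
  simp_rw [← hT.card_filter_isBetween_ne]
  exact sum_card_bipartiteAbove_eq_sum_card_bipartiteBelow _

lemma Connected.card_filter_isBetween_le (hG : G.Connected) {ι : Type*} [Fintype ι] {r : V}
    {s t : ι → V} {c : ℕ} (hs : ∀ i, G.IsBetween r (s i) (t i))
    (hc : ∀ j, #{i | G.IsBetween r (s i) (t j)} ≤ c) (w : V) :
    #{i | G.IsBetween (s i) w (t i)} ≤ c := by
  rcases ({i | G.IsBetween (s i) w (t i)} : Finset ι).eq_empty_or_nonempty with he | ⟨j, hj⟩
  · simp [he]
  · refine (card_le_card fun i hi ↦ ?_).trans (hc j)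
    simp only [mem_filter, mem_univ, true_and] at hi hj ⊢
    exact ((hs j).trans_right hG hj).trans_left hG ((hs i).trans_right_left hG hi)

end SimpleGraph

theorem stmt0 {V : Type*} [Fintype V]
    (G : SimpleGraph V) [DecidableRel G.Adj] (hT : G.IsTree) (root : V)
    (c : ℕ) {ι : Type*} [Fintype ι] (leafOf pos : ι → V)
    (hleaf : ∀ i, G.degree (leafOf i) ≤ 1)
    (hpath : ∀ i, G.dist root (leafOf i) = G.dist root (pos i) + G.dist (pos i) (leafOf i))
    (hcap : ∀ v : V, G.degree v ≤ 1 →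
      (Finset.univ.filter
        (fun i => G.dist root v = G.dist root (pos i) + G.dist (pos i) v)).card ≤ c) :
    ∑ i, G.dist (pos i) (leafOf i) ≤ c * (Fintype.card V - 1) := by
  have hG := hT.connected
  have hpath' (i : ι) : G.IsBetween root (pos i) (leafOf i) := hpath i
  have hload (w : V) : #{i | G.IsBetween (pos i) w (leafOf i) ∧ w ≠ pos i} ≤ c :=
    (card_le_card (monotone_filter_right _ fun _ _ h ↦ h.1)).trans
      (hG.card_filter_isBetween_le hpath' (fun j ↦ hcap _ (hleaf j)) w)
  have hroot : #{i | G.IsBetween (pos i) root (leafOf i) ∧ root ≠ pos i} = 0 := by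
    simp only [card_eq_zero, filter_eq_empty_iff, mem_univ, true_implies, not_and_not_right]
    exact fun i h ↦ (hpath' i).eq_of_swap hG h
  calc ∑ i, G.dist (pos i) (leafOf i)
      = ∑ w ∈ univ.erase root, #{i | G.IsBetween (pos i) w (leafOf i) ∧ w ≠ pos i} := by
        rw [hT.sum_dist_eq_sum_card_filter, ← sum_erase_add _ _ (mem_univ root), hroot, add_zero]
    _ ≤ ∑ _w ∈ univ.erase root, c := sum_le_sum fun w _ ↦ hload w
    _ = c * (Fintype.card V - 1) := by
        rw [sum_const, card_erase_of_mem (mem_univ _), card_univ, smul_eq_mul, mul_comm]
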